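/- Let n ≥ 1, fix x ∈ ℝⁿ and t ∈ [0,T], let σ be an n×n real matrix, f : ℝⁿ → ℝⁿ, and h̃ : ℝⁿ × ℝ → ℝ. For each 𝒯 > 0 let V̂_𝒯(x,t,·) : [t, t+𝒯] → ℝ be continuously differentiable in τ and satisfy the backward equation −∂_τ V̂_𝒯(x,t,τ) = (1/𝒯)·h̃(x, ρ̂_𝒯(x,t,τ)) + (∂_x V̂_𝒯(x,t,τ))ᵀ f(x) − (1/2)(∂_x V̂_𝒯(x,t,τ))ᵀ(∂_x V̂_𝒯(x,t,τ)) + (1/2)Tr(σσᵀ ∂_{xx} V̂_𝒯(x,t,τ)) with terminal condition V̂_𝒯(x,t,t+𝒯) = 0. Assume there is a constant M such that the combined non-cost terms |(∂_x V̂_𝒯)ᵀ f(x) − (1/2)(∂_x V̂_𝒯)ᵀ(∂_x V̂_𝒯) + (1/2)Tr(σσᵀ ∂_{xx} V̂_𝒯)| ≤ M uniformly in τ ∈ [t, t+𝒯] and in 𝒯, and that sup_{τ ∈ [t,t+𝒯]} |h̃(x, ρ̂_𝒯(x,t,τ)) − h̃(x, ρ(x,t))| → 0 as 𝒯 → 0⁺,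 where ρ̂_𝒯(x,t,t) = ρ(x,t). Then lim_{𝒯→0⁺} V̂_𝒯(x,t,t) = h̃(x, ρ(x,t)). -/

import Mathlib

open Filter Set Matrix

/-- The spatial gradient of `g : ℝⁿ → ℝ` at `x` (vector of partial derivatives). -/
noncomputable def sgrad {n : ℕ} (g : (Fin n → ℝ) → ℝ) (x : Fin n → ℝ) : Fin n → ℝ :=
  fun j => fderiv ℝ g x (Pi.single j 1)

/-- The spatial Hessian of `g : ℝⁿ → ℝ` at `x` (matrix of second partial derivatives). -/
noncomputable def shess {n : ℕ} (g : (Fin n → ℝ) → ℝ) (x : Fin n → ℝ) :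
    Matrix (Fin n) (Fin n) ℝ :=
  Matrix.of fun i j =>
    fderiv ℝ (fun y => fderiv ℝ g y (Pi.single j 1)) x (Pi.single i 1)

/-- The dot product on `ℝⁿ`. -/
noncomputable def dotp {n : ℕ} (a b : Fin n → ℝ) : ℝ := ∑ j, a j * b j

/-! Integrating the backward equation from the terminal value `0` writes `V̂_𝒯(x,t,t)` as the
window average of `h̃(x, ρ̂_𝒯)` plus the integral of the non-cost terms. The average is within
`sup_τ |h̃(x, ρ̂_𝒯) - h̃(x, ρ)|` of `h̃(x, ρ(x,t))` and the remainder is at most `M 𝒯`; both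
vanish as `𝒯 → 0⁺`. -/

theorem abs_sub_le_mul_of_hasDerivAt_of_eq_zero {u u' : ℝ → ℝ} {a L c K : ℝ} (hL : 0 < L)
    (hu : ∀ τ ∈ Icc a (a + L), HasDerivAt u (u' τ) τ) (hterm : u (a + L) = 0)
    (hK : ∀ τ ∈ Icc a (a + L), |-u' τ - c / L| ≤ K) :
    |u a - c| ≤ K * L := by
  -- `w' = u' + c / L` measures how far `-u'` is from its required average `c / L`.
  set w : ℝ → ℝ := fun τ => u τ + c / L * (τ - a)
  have hw : ∀ τ ∈ Icc a (a + L), HasDerivWithinAt w (u' τ + c / L) (Icc a (a + L)) τ :=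
    fun τ hτ => by
      have hwτ := (hu τ hτ).add (((hasDerivAt_id' τ).sub_const a).const_mul (c / L))
      rw [mul_one] at hwτ
      exact hwτ.hasDerivWithinAt
  have hw' : ∀ τ ∈ Ico a (a + L), ‖u' τ + c / L‖ ≤ K := fun τ hτ => by
    rw [Real.norm_eq_abs, ← abs_neg, neg_add]
    exact hK τ (Ico_subset_Icc_self hτ)
  have hmv := norm_image_sub_le_of_norm_deriv_le_segment' hw hw' (a + L)
    (right_mem_Icc.2 (by linarith))
  have hwa : w (a + L) - w a = c - u a := by
    simp only [w, hterm]
    field_simp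
    ring
  rwa [hwa, Real.norm_eq_abs, abs_sub_comm, add_sub_cancel_left] at hmv

theorem abs_sub_le_of_neg_deriv_eq_scaled_cost_add {u u' h N : ℝ → ℝ} {a L c ε M : ℝ}
    (hL : 0 < L) (hu : ∀ τ ∈ Icc a (a + L), HasDerivAt u (u' τ) τ) (hterm : u (a + L) = 0)
    (heq : ∀ τ ∈ Icc a (a + L), -u' τ = 1 / L * h τ + N τ)
    (hh : ∀ τ ∈ Icc a (a + L), |h τ - c| ≤ ε) (hN : ∀ τ ∈ Icc a (a + L), |N τ| ≤ M) :
    |u a - c| ≤ ε + M * L := by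
  have hbound : ∀ τ ∈ Icc a (a + L), |-u' τ - c / L| ≤ ε / L + M := fun τ hτ => by
    have hsplit : -u' τ - c / L = (h τ - c) / L + N τ := by
      rw [heq τ hτ]
      ring
    rw [hsplit]
    calc |(h τ - c) / L + N τ| ≤ |h τ - c| / L + |N τ| :=
          (abs_add_le _ _).trans_eq (by rw [abs_div, abs_of_pos hL])
      _ ≤ ε / L + M := by gcongr; exacts [hh τ hτ, hN τ hτ]
  calc |u a - c| ≤ (ε / L + M) * L := abs_sub_le_mul_of_hasDerivAt_of_eq_zero hL hu hterm hbound
    _ = ε + M * L := by field_simp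

theorem tendsto_nhdsGT_zero_of_abs_sub_le_add_mul {g : ℝ → ℝ} {c M : ℝ}
    (hg : ∀ ε > 0, ∀ᶠ L in nhdsWithin 0 (Ioi 0), |g L - c| ≤ ε + M * L) :
    Tendsto g (nhdsWithin 0 (Ioi 0)) (nhds c) := by
  rw [Metric.tendsto_nhds]
  intro ε hε
  have hML : Tendsto (fun L : ℝ => M * L) (nhdsWithin 0 (Ioi 0)) (nhds 0) := by
    simpa using (tendsto_nhdsWithin_of_tendsto_nhds ((continuous_const_mul M).tendsto 0))
  filter_upwards [hg (ε / 2) (half_pos hε), hML.eventually (gt_mem_nhds (half_pos hε))]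
    with L hgL hMLε
  rw [Real.dist_eq]
  linarith

theorem mpmfg_value_function_limit_general
    (n : ℕ) (x : Fin n → ℝ) (t : ℝ)
    (σ : Matrix (Fin n) (Fin n) ℝ)
    (f : (Fin n → ℝ) → (Fin n → ℝ))
    (htilde : (Fin n → ℝ) × ℝ → ℝ)
    -- the value function `V̂_𝒯(y, τ)` (with the current time `t` fixed),
    -- its `τ`-derivative `V' 𝒯 τ` at the point `x`,
    -- and the predicted density `ρ̂_𝒯(τ)` at the point `x` (with `t` fixed)
    (Vhat : ℝ → (Fin n → ℝ) → ℝ → ℝ) (V' : ℝ → ℝ → ℝ) (ρhat : ℝ → ℝ → ℝ)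
    -- the observed density `ρ(x,t)`
    (ρxt : ℝ)
    -- `V̂_𝒯(x,t,·)` is continuously differentiable in `τ` on `[t, t+𝒯]`
    (hC1 : ∀ 𝒯 > (0 : ℝ), ∀ τ ∈ Icc t (t + 𝒯),
      HasDerivAt (fun s => Vhat 𝒯 x s) (V' 𝒯 τ) τ)
    -- the backward Hamilton–Jacobi–Bellman equation
    (hHJB : ∀ 𝒯 > (0 : ℝ), ∀ τ ∈ Icc t (t + 𝒯),
      -(V' 𝒯 τ) =
        (1 / 𝒯) * htilde (x, ρhat 𝒯 τ)
          + dotp (sgrad (fun y => Vhat 𝒯 y τ) x) (f x)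
          - (1 / 2) * dotp (sgrad (fun y => Vhat 𝒯 y τ) x) (sgrad (fun y => Vhat 𝒯 y τ) x)
          + (1 / 2) * Matrix.trace (σ * σᵀ * shess (fun y => Vhat 𝒯 y τ) x))
    -- the terminal condition `V̂_𝒯(x,t,t+𝒯) = 0`
    (hterm : ∀ 𝒯 > (0 : ℝ), Vhat 𝒯 x (t + 𝒯) = 0)
    -- the combined non-cost terms are uniformly bounded by `M`
    (M : ℝ)
    (hbound : ∀ 𝒯 > (0 : ℝ), ∀ τ ∈ Icc t (t + 𝒯),
      |dotp (sgrad (fun y => Vhat 𝒯 y τ) x) (f x)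
          - (1 / 2) * dotp (sgrad (fun y => Vhat 𝒯 y τ) x) (sgrad (fun y => Vhat 𝒯 y τ) x)
          + (1 / 2) * Matrix.trace (σ * σᵀ * shess (fun y => Vhat 𝒯 y τ) x)| ≤ M)
    -- `sup_{τ ∈ [t,t+𝒯]} |h̃(x, ρ̂_𝒯(x,t,τ)) - h̃(x, ρ(x,t))| → 0` as `𝒯 → 0⁺`
    (hconv : ∀ ε > (0 : ℝ), ∃ δ > (0 : ℝ), ∀ 𝒯, 0 < 𝒯 → 𝒯 < δ →
      ∀ τ ∈ Icc t (t + 𝒯), |htilde (x, ρhat 𝒯 τ) - htilde (x, ρxt)| ≤ ε) :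
    Tendsto (fun 𝒯 => Vhat 𝒯 x t) (nhdsWithin 0 (Ioi 0)) (nhds (htilde (x, ρxt))) := by
  refine tendsto_nhdsGT_zero_of_abs_sub_le_add_mul (M := M) fun ε hε => ?_
  obtain ⟨δ, hδ, hcost⟩ := hconv ε hε
  filter_upwards [Ioo_mem_nhdsGT hδ] with 𝒯 ⟨h𝒯, h𝒯δ⟩
  refine abs_sub_le_of_neg_deriv_eq_scaled_cost_add h𝒯 (hC1 𝒯 h𝒯) (hterm 𝒯 h𝒯)
    (fun τ hτ => ?_) (hcost 𝒯 h𝒯 h𝒯δ) (hbound 𝒯 h𝒯)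
  rw [hHJB 𝒯 h𝒯 τ hτ]
  ring

/-- for the value function `V̂_𝒯(x,t,·)` of the model predictive mean field
game with running cost `(1/𝒯)·h̃`, zero terminal value at `τ = t + 𝒯`, uniformly bounded
non-cost Hamiltonian terms, and predicted density `ρ̂_𝒯(x,t,τ)` whose cost
`h̃(x, ρ̂_𝒯(x,t,τ))` converges uniformly on the prediction window to `h̃(x, ρ(x,t))`,
one has `lim_{𝒯→0⁺} V̂_𝒯(x,t,t) = h̃(x, ρ(x,t))`. -/
theorem mpmfg_value_function_limit
    (n : ℕ) (hn : 1 ≤ n) (T : ℝ) (x : Fin n → ℝ) (t : ℝ) (ht : t ∈ Icc 0 T)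
    (σ : Matrix (Fin n) (Fin n) ℝ)
    (f : (Fin n → ℝ) → (Fin n → ℝ))
    (htilde : (Fin n → ℝ) × ℝ → ℝ)
    -- the value function `V̂_𝒯(y, τ)` (with the current time `t` fixed),
    -- its `τ`-derivative `V' 𝒯 τ` at the point `x`,
    -- and the predicted density `ρ̂_𝒯(τ)` at the point `x` (with `t` fixed)
    (Vhat : ℝ → (Fin n → ℝ) → ℝ → ℝ) (V' : ℝ → ℝ → ℝ) (ρhat : ℝ → ℝ → ℝ)
    -- the observed density `ρ(x,t)`
    (ρxt : ℝ)
    -- `V̂_𝒯(x,t,·)` is continuously differentiable in `τ` on `[t, t+𝒯]`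
    (hC1 : ∀ 𝒯 > (0 : ℝ), ∀ τ ∈ Icc t (t + 𝒯),
      HasDerivAt (fun s => Vhat 𝒯 x s) (V' 𝒯 τ) τ)
    (hC1' : ∀ 𝒯 > (0 : ℝ), ContinuousOn (V' 𝒯) (Icc t (t + 𝒯)))
    -- the backward Hamilton–Jacobi–Bellman equation
    (hHJB : ∀ 𝒯 > (0 : ℝ), ∀ τ ∈ Icc t (t + 𝒯),
      -(V' 𝒯 τ) =
        (1 / 𝒯) * htilde (x, ρhat 𝒯 τ)
          + dotp (sgrad (fun y => Vhat 𝒯 y τ) x) (f x)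
          - (1 / 2) * dotp (sgrad (fun y => Vhat 𝒯 y τ) x) (sgrad (fun y => Vhat 𝒯 y τ) x)
          + (1 / 2) * Matrix.trace (σ * σᵀ * shess (fun y => Vhat 𝒯 y τ) x))
    -- the terminal condition `V̂_𝒯(x,t,t+𝒯) = 0`
    (hterm : ∀ 𝒯 > (0 : ℝ), Vhat 𝒯 x (t + 𝒯) = 0)
    -- the combined non-cost terms are uniformly bounded by `M`
    (M : ℝ)
    (hbound : ∀ 𝒯 > (0 : ℝ), ∀ τ ∈ Icc t (t + 𝒯),
      |dotp (sgrad (fun y => Vhat 𝒯 y τ) x) (f x)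
          - (1 / 2) * dotp (sgrad (fun y => Vhat 𝒯 y τ) x) (sgrad (fun y => Vhat 𝒯 y τ) x)
          + (1 / 2) * Matrix.trace (σ * σᵀ * shess (fun y => Vhat 𝒯 y τ) x)| ≤ M)
    -- `sup_{τ ∈ [t,t+𝒯]} |h̃(x, ρ̂_𝒯(x,t,τ)) - h̃(x, ρ(x,t))| → 0` as `𝒯 → 0⁺`
    (hconv : ∀ ε > (0 : ℝ), ∃ δ > (0 : ℝ), ∀ 𝒯, 0 < 𝒯 → 𝒯 < δ →
      ∀ τ ∈ Icc t (t + 𝒯), |htilde (x, ρhat 𝒯 τ) - htilde (x, ρxt)| ≤ ε)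
    -- `ρ̂_𝒯(x,t,t) = ρ(x,t)`
    (hinit : ∀ 𝒯 > (0 : ℝ), ρhat 𝒯 t = ρxt) :
    Tendsto (fun 𝒯 => Vhat 𝒯 x t) (nhdsWithin 0 (Ioi 0)) (nhds (htilde (x, ρxt))) :=
  mpmfg_value_function_limit_general n x t σ f htilde Vhat V' ρhat ρxt hC1 hHJB hterm M hbound hconv
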